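/- (Theorem 5.1, curl-free part) For all 0 ≤ i, j ≤ n with (i,j) ≠ (0,0), setting U⁰_{ij} = τ_i · s̄_i c̃_jᵀ ∈ ℝ^{n×(n+1)} and V⁰_{ij} = τ_j · c̃_i s̄_jᵀ ∈ ℝ^{(n+1)×n}, one has U⁰_{ij} Ā − B̄ V⁰_{ij} B̄ = 0 and −B̄ᵀ U⁰_{ij} B̄ᵀ + Ā V⁰_{ij} = 0; that is, (U⁰_{ij}, V⁰_{ij}) is an eigen-solution of the discrete Maxwell eigenvalue problem with natural boundary conditions with eigenvalue 0. -/
import Mathlib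


open Matrix Real

/-- `τ_i = -2 sin(iπ/(2n))`. -/
noncomputable def tau (n i : ℕ) : ℝ := -2 * Real.sin ((i : ℝ) * Real.pi / (2 * n))

/-- `ν_j = 1` for `1 ≤ j ≤ n-1` and `ν_0 = ν_n = 1/√2`. -/
noncomputable def nubar (n j : ℕ) : ℝ := if j = 0 ∨ j = n then 1 / Real.sqrt 2 else 1

/-- Neumann stiffness matrix `Ā ∈ ℝ^{(n+1)×(n+1)}` with diagonal `(1, 2, …, 2, 1)`. -/
def Abar (n : ℕ) : Matrix (Fin (n + 1)) (Fin (n + 1)) ℝ :=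
  Matrix.of fun k l =>
    if (k : ℕ) = (l : ℕ) then (if (k : ℕ) = 0 ∨ (k : ℕ) = n then 1 else 2)
    else if (k : ℕ) + 1 = (l : ℕ) ∨ (l : ℕ) + 1 = (k : ℕ) then -1 else 0

/-- Neumann difference matrix `B̄ ∈ ℝ^{n×(n+1)}`. -/
def Bbar (n : ℕ) : Matrix (Fin n) (Fin (n + 1)) ℝ :=
  Matrix.of fun k l =>
    if (l : ℕ) = (k : ℕ) then -1 else if (l : ℕ) = (k : ℕ) + 1 then 1 else 0

/-- The vector `s̄_j ∈ ℝ^n` with entries `(s̄_j)_k = ν_j sin((2k-1)jπ/(2n))`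
(so `s̄_0 = 0`). -/
noncomputable def sbarvec (n j : ℕ) : Fin n → ℝ :=
  fun k => nubar n j * Real.sin (((2 * (k : ℕ) + 1) * j : ℕ) * Real.pi / (2 * n))

/-- The vector `c̃_j ∈ ℝ^{n+1} = ν_j (1, cos(jπ/n), …, cos((n-1)jπ/n), (-1)^j)ᵀ`;
equivalently `(c̃_j)_k = ν_j cos(kjπ/n)` for `0 ≤ k ≤ n`. -/
noncomputable def ctilde (n j : ℕ) : Fin (n + 1) → ℝ :=
  fun k => nubar n j * Real.cos (((k : ℕ) * j : ℕ) * Real.pi / n)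

lemma vecMulVec_mul' {m p q : Type*} [Fintype p] (x : m → ℝ) (y : p → ℝ)
    (M : Matrix p q ℝ) : vecMulVec x y * M = vecMulVec x (y ᵥ* M) := by
  ext k l
  simp [Matrix.mul_apply, vecMulVec_apply, Matrix.vecMul, dotProduct,
    Finset.mul_sum, mul_assoc]

lemma mul_vecMulVec' {m p q : Type*} [Fintype p] (x : p → ℝ) (y : q → ℝ)
    (M : Matrix m p ℝ) : M * vecMulVec x y = vecMulVec (M *ᵥ x) y := by
  ext k l
  simp only [Matrix.mul_apply, vecMulVec_apply, Matrix.mulVec, dotProduct,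
    Finset.sum_mul]
  exact Finset.sum_congr rfl fun _ _ => by ring

lemma vecMulVec_smul_right {m p : Type*} (x : m → ℝ) (c : ℝ) (y : p → ℝ) :
    vecMulVec x (c • y) = c • vecMulVec x y := by
  ext k l; simp [vecMulVec_apply]; ring

lemma vecMulVec_smul_left {m p : Type*} (c : ℝ) (x : m → ℝ) (y : p → ℝ) :
    vecMulVec (c • x) y = c • vecMulVec x y := by
  ext k l; simp [vecMulVec_apply]; ring

lemma Bbar_mulVec_ctilde (n : ℕ) (hn : 1 ≤ n) (j : ℕ) :
    Bbar n *ᵥ ctilde n j = tau n j • sbarvec n j := by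
  have hn0 : (n : ℝ) ≠ 0 := by positivity
  funext k
  have hsum : (Bbar n *ᵥ ctilde n j) k
      = ∑ l ∈ ({k.castSucc, k.succ} : Finset (Fin (n+1))), Bbar n k l * ctilde n j l := by
    rw [Matrix.mulVec, dotProduct]
    refine (Finset.sum_subset (Finset.subset_univ _) ?_).symm
    intro l _ hl
    simp only [Finset.mem_insert, Finset.mem_singleton] at hl
    push_neg at hl
    have h1 : (l : ℕ) ≠ (k : ℕ) := fun h => hl.1 (Fin.ext (by simpa using h))
    have h2 : (l : ℕ) ≠ (k : ℕ) + 1 := fun h => hl.2 (Fin.ext (by simpa using h))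
    simp [Bbar, h1, h2]
  rw [hsum, Finset.sum_pair (by simp [Fin.ext_iff])]
  have hB1 : Bbar n k k.castSucc = -1 := by simp [Bbar]
  have hB2 : Bbar n k k.succ = 1 := by simp [Bbar]
  rw [hB1, hB2]
  simp only [ctilde, sbarvec, tau, Fin.coe_castSucc, Fin.val_succ, Pi.smul_apply, smul_eq_mul]
  push_cast
  have key : Real.cos (((k:ℝ)+1)*j*π/n) - Real.cos ((k:ℝ)*j*π/n)
      = -2 * Real.sin ((2*(k:ℝ)+1)*j*π/(2*n)) * Real.sin ((j:ℝ)*π/(2*n)) := by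
    rw [Real.cos_sub_cos]
    have h1 : (((k:ℝ)+1)*j*π/n + (k:ℝ)*j*π/n)/2 = (2*(k:ℝ)+1)*(j:ℝ)*π/(2*n) := by
      field_simp; ring
    have h2 : (((k:ℝ)+1)*j*π/n - (k:ℝ)*j*π/n)/2 = (j:ℝ)*π/(2*n) := by
      field_simp; ring
    rw [h1, h2]
  linear_combination nubar n j * key

lemma Abar_eq (n : ℕ) (hn : 1 ≤ n) : Abar n = (Bbar n)ᵀ * Bbar n := by
  ext l l'
  rw [Matrix.mul_apply]
  simp only [Matrix.transpose_apply]
  have ha : (l : ℕ) < n + 1 := l.isLt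
  have hb : (l' : ℕ) < n + 1 := l'.isLt
  -- helper to kill vanishing terms
  have hz : ∀ k : Fin n, ((l:ℕ) ≠ (k:ℕ) ∧ (l:ℕ) ≠ (k:ℕ)+1) ∨
      ((l':ℕ) ≠ (k:ℕ) ∧ (l':ℕ) ≠ (k:ℕ)+1) → Bbar n k l * Bbar n k l' = 0 := by
    rintro k (⟨h1, h2⟩ | ⟨h1, h2⟩) <;> simp [Bbar, h1, h2]
  by_cases hab : (l : ℕ) = (l' : ℕ)
  · by_cases h0 : (l : ℕ) = 0
    · -- single term k₀ = 0
      have hA : Abar n l l' = 1 := by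
        simp only [Abar, Matrix.of_apply]; rw [if_pos hab, if_pos (Or.inl h0)]
      rw [hA]
      rw [Finset.sum_eq_single (⟨0, by omega⟩ : Fin n)]
      · simp [Bbar, h0, hab.symm.trans h0]
      · intro k _ hk
        have hk' : (k : ℕ) ≠ 0 := fun h => hk (Fin.ext h)
        exact hz k (Or.inl ⟨by omega, by omega⟩)
      · intro h; exact absurd (Finset.mem_univ _) h
    · by_cases hN : (l : ℕ) = n
      · have hA : Abar n l l' = 1 := by
          simp only [Abar, Matrix.of_apply]; rw [if_pos hab, if_pos (Or.inr hN)]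
        rw [hA]
        rw [Finset.sum_eq_single (⟨n - 1, by omega⟩ : Fin n)]
        · have e1 : (l:ℕ) ≠ n - 1 := by omega
          have e2 : (l:ℕ) = (n-1) + 1 := by omega
          have e1' : (l':ℕ) ≠ n - 1 := by omega
          have e2' : (l':ℕ) = (n-1) + 1 := by omega
          simp [Bbar, e1, e2, e1', e2']
        · intro k _ hk
          have hk' : (k : ℕ) ≠ n - 1 := fun h => hk (Fin.ext h)
          exact hz k (Or.inl ⟨by omega, by omega⟩)
        · intro h; exact absurd (Finset.mem_univ _) h
      · -- interior: two terms
        have hA : Abar n l l' = 2 := by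
          simp only [Abar, Matrix.of_apply]
          rw [if_pos hab, if_neg (by push_neg; exact ⟨h0, hN⟩)]
        rw [hA]
        have hpair : ∑ k : Fin n, Bbar n k l * Bbar n k l'
            = ∑ k ∈ ({⟨(l:ℕ) - 1, by omega⟩, ⟨(l:ℕ), by omega⟩} : Finset (Fin n)),
              Bbar n k l * Bbar n k l' := by
          refine (Finset.sum_subset (Finset.subset_univ _) ?_).symm
          intro k _ hk
          simp only [Finset.mem_insert, Finset.mem_singleton, Fin.ext_iff] at hk
          push_neg at hk
          exact hz k (Or.inl ⟨by omega, by omega⟩)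
        rw [hpair, Finset.sum_pair (by simp [Fin.ext_iff]; omega)]
        have e1 : (l:ℕ) ≠ (l:ℕ) - 1 := by omega
        have e2 : (l:ℕ) = ((l:ℕ)-1) + 1 := by omega
        have e1' : (l':ℕ) ≠ (l:ℕ) - 1 := by omega
        have e2' : (l':ℕ) = ((l:ℕ)-1) + 1 := by omega
        have f1' : (l':ℕ) = (l:ℕ) := hab.symm
        simp only [Bbar, Matrix.of_apply]
        rw [if_neg e1, if_pos e2, if_neg e1', if_pos e2']
        simp [f1']
        norm_num
  · by_cases h1 : (l':ℕ) = (l:ℕ) + 1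
    · have hA : Abar n l l' = -1 := by
        simp only [Abar, Matrix.of_apply]
        rw [if_neg hab, if_pos (Or.inl h1.symm)]
      rw [hA]
      rw [Finset.sum_eq_single (⟨(l:ℕ), by omega⟩ : Fin n)]
      · have hne : (l':ℕ) ≠ (l:ℕ) := fun h => hab h.symm
        simp only [Bbar, Matrix.of_apply]
        simp [hne, h1]
      · intro k _ hk
        have hk' : (k : ℕ) ≠ (l:ℕ) := fun h => hk (Fin.ext h)
        have : ((l:ℕ) ≠ (k:ℕ) ∧ (l:ℕ) ≠ (k:ℕ)+1) ∨
            ((l':ℕ) ≠ (k:ℕ) ∧ (l':ℕ) ≠ (k:ℕ)+1) := by omega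
        exact hz k this
      · intro h; exact absurd (Finset.mem_univ _) h
    · by_cases h2 : (l:ℕ) = (l':ℕ) + 1
      · have hA : Abar n l l' = -1 := by
          simp only [Abar, Matrix.of_apply]
          rw [if_neg hab, if_pos (Or.inr h2.symm)]
        rw [hA]
        rw [Finset.sum_eq_single (⟨(l':ℕ), by omega⟩ : Fin n)]
        · simp only [Bbar, Matrix.of_apply]
          rw [if_neg (by omega), if_pos h2]
          simp
        · intro k _ hk
          have hk' : (k : ℕ) ≠ (l':ℕ) := fun h => hk (Fin.ext h)
          have : ((l:ℕ) ≠ (k:ℕ) ∧ (l:ℕ) ≠ (k:ℕ)+1) ∨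
              ((l':ℕ) ≠ (k:ℕ) ∧ (l':ℕ) ≠ (k:ℕ)+1) := by omega
          exact hz k this
        · intro h; exact absurd (Finset.mem_univ _) h
      · have hA : Abar n l l' = 0 := by
          simp only [Abar, Matrix.of_apply]
          rw [if_neg hab, if_neg (by push_neg; omega)]
        rw [hA]
        refine (Finset.sum_eq_zero ?_).symm
        intro k _
        exact hz k (by omega)


/-- Theorem 5.1, curl-free part: for `0 ≤ i, j ≤ n` with `(i,j) ≠ (0,0)`, the pair
`(U⁰_{ij}, V⁰_{ij}) = (τ_i · s̄_i c̃_jᵀ, τ_j · c̃_i s̄_jᵀ)` is an eigen-solution of the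
discrete Maxwell eigenvalue problem with natural boundary conditions with eigenvalue `0`. -/
theorem stmt19 (n : ℕ) (hn : 2 ≤ n) (i j : Fin (n + 1))
    (hij : ¬((i : ℕ) = 0 ∧ (j : ℕ) = 0))
    (U : Matrix (Fin n) (Fin (n + 1)) ℝ)
    (hU : U = tau n (i : ℕ) • Matrix.vecMulVec (sbarvec n (i : ℕ)) (ctilde n (j : ℕ)))
    (V : Matrix (Fin (n + 1)) (Fin n) ℝ)
    (hV : V = tau n (j : ℕ) • Matrix.vecMulVec (ctilde n (i : ℕ)) (sbarvec n (j : ℕ))) :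
    U * Abar n - Bbar n * V * Bbar n = 0 ∧
    -((Bbar n)ᵀ * U * (Bbar n)ᵀ) + Abar n * V = 0 := by
  have hA : Abar n = (Bbar n)ᵀ * Bbar n := Abar_eq n (by omega)
  have hBc : ∀ m : ℕ, Bbar n *ᵥ ctilde n m = tau n m • sbarvec n m :=
    fun m => Bbar_mulVec_ctilde n (by omega) m
  have key : U * (Bbar n)ᵀ = Bbar n * V := by
    rw [hU, hV, Matrix.smul_mul, Matrix.mul_smul]
    rw [vecMulVec_mul', Matrix.vecMul_transpose, hBc (j : ℕ), vecMulVec_smul_right]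
    rw [mul_vecMulVec', hBc (i : ℕ), vecMulVec_smul_left]
    rw [smul_smul, smul_smul, mul_comm]
  constructor
  · rw [hA, ← Matrix.mul_assoc, key, sub_self]
  · rw [hA, Matrix.mul_assoc ((Bbar n)ᵀ) U ((Bbar n)ᵀ), key, Matrix.mul_assoc, neg_add_cancel]
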